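/- Under the setup of the previous lemma, with T̂ the indices of the K largest rows of V (in ℓ₂-norm), the discarded mass satisfies ‖(X^K)_{T̂ᶜ,:}‖_F ≤ ((1+δ)/(1−δ))·‖(X^K)_{Γᶜ,:}‖_F + (2/(1−δ))·(‖A(X−X^K)‖_F + ‖W‖_F). -/

import Mathlib

open scoped BigOperators
open Matrix

noncomputable def frob {m n : Type*} [Fintype m] [Fintype n] (X : Matrix m n ℝ) : ℝ :=
  Real.sqrt (∑ i, ∑ j, (X i j) ^ 2)

noncomputable def rowNorm {m n : Type*} [Fintype n] (X : Matrix m n ℝ) (i : m) : ℝ :=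
  Real.sqrt (∑ j, (X i j) ^ 2)

noncomputable def norm21 {m n : Type*} [Fintype m] [Fintype n] (X : Matrix m n ℝ) : ℝ :=
  ∑ i, rowNorm X i

noncomputable def restrictRows {m n : Type*} (X : Matrix m n ℝ) (S : Set m) : Matrix m n ℝ :=
  fun i j => S.indicator (fun i' => X i' j) i

noncomputable def vnorm {m : Type*} [Fintype m] (v : m → ℝ) : ℝ :=
  Real.sqrt (∑ i, (v i) ^ 2)

/-- `X` has at most `s` nonzero rows. -/
def rowSparse {m n : Type*} (X : Matrix m n ℝ) (s : ℕ) : Prop :=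
  {i | X i ≠ 0}.ncard ≤ s

/-- Column submatrix of `A` with columns indexed by `S`. -/
def colSub {M N : ℕ} (A : Matrix (Fin M) (Fin N) ℝ) (S : Finset (Fin N)) :
    Matrix (Fin M) {j // j ∈ S} ℝ :=
  A.submatrix id (fun j => (j : Fin N))

/-- `D` is the Moore–Penrose pseudo-inverse of `A` (the four Penrose conditions). -/
def IsPinv {m n : Type*} [Fintype m] [Fintype n] (A : Matrix m n ℝ) (D : Matrix n m ℝ) : Prop :=
  A * D * A = A ∧ D * A * D = D ∧ (A * D)ᵀ = A * D ∧ (D * A)ᵀ = D * A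

/-- Restricted isometry property of order `s` with constant `δ`. -/
def RIP {M N : ℕ} (A : Matrix (Fin M) (Fin N) ℝ) (s : ℕ) (δ : ℝ) : Prop :=
  ∀ x : Fin N → ℝ, {i | x i ≠ 0}.ncard ≤ s →
    (1 - δ) * (∑ i, (x i) ^ 2) ≤ (∑ i, (A.mulVec x i) ^ 2) ∧
      (∑ i, (A.mulVec x i) ^ 2) ≤ (1 + δ) * (∑ i, (x i) ^ 2)

set_option linter.unusedSectionVars false
set_option linter.unusedVariables false

lemma le_of_sq_le {x y : ℝ} (hy : 0 ≤ y) (h : x ^ 2 ≤ y ^ 2) : x ≤ y := by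
  nlinarith [sq_nonneg (x - y), sq_nonneg (x + y)]

lemma cancel_bound {δ t d : ℝ} (ht : 0 ≤ t) (hd : 0 ≤ d) (hδ0 : 0 ≤ δ)
    (h : (1 - δ) * t ^ 2 ≤ δ * t * d) : (1 - δ) * t ≤ δ * d := by
  rcases eq_or_lt_of_le ht with h0 | h0
  · rw [← h0]; nlinarith
  · nlinarith

lemma cancel_bound2 {t c : ℝ} (ht : 0 ≤ t) (hc : 0 ≤ c) (h : t ^ 2 ≤ t * c) : t ≤ c := by
  rcases eq_or_lt_of_le ht with h0 | h0
  · rw [← h0]; exact hc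
  · nlinarith

lemma shrink_bound {δ t c : ℝ} (hδ0 : 0 ≤ δ) (h1 : 0 < 1 - δ) (ht : 0 ≤ t) (hc : 0 ≤ c)
    (h : (1 - δ) * t ^ 2 ≤ c ^ 2) : (1 - δ) * t ≤ c := by
  have h2 : ((1 - δ) * t) ^ 2 ≤ c ^ 2 := by nlinarith [sq_nonneg t]
  exact le_of_sq_le hc h2





section Helpers
variable {ι : Type*} [Fintype ι]

lemma sum_sq_nonneg (f : ι → ℝ) : 0 ≤ ∑ i, f i ^ 2 := by positivity

lemma abs_sum_mul_le (f g : ι → ℝ) :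
    |∑ i, f i * g i| ≤ Real.sqrt (∑ i, f i ^ 2) * Real.sqrt (∑ i, g i ^ 2) := by
  rw [abs_le]
  refine ⟨?_, Real.sum_mul_le_sqrt_mul_sqrt _ _ _⟩
  have h := Real.sum_mul_le_sqrt_mul_sqrt Finset.univ (fun i => -f i) g
  have e1 : ∑ i, -f i * g i = -∑ i, f i * g i := by
    rw [← Finset.sum_neg_distrib]; exact Finset.sum_congr rfl fun i _ => neg_mul _ _
  have e2 : ∑ i, (-f i) ^ 2 = ∑ i, f i ^ 2 := by
    simp [neg_sq]
  rw [e1, e2] at h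
  linarith

lemma sqrt_sum_sq_add_le (f g : ι → ℝ) :
    Real.sqrt (∑ i, (f i + g i) ^ 2) ≤
      Real.sqrt (∑ i, f i ^ 2) + Real.sqrt (∑ i, g i ^ 2) := by
  have hf := sum_sq_nonneg f
  have hg := sum_sq_nonneg g
  have hcs := Real.sum_mul_le_sqrt_mul_sqrt Finset.univ f g
  have hexp : ∑ i, (f i + g i) ^ 2
      = (∑ i, f i ^ 2) + 2 * (∑ i, f i * g i) + ∑ i, g i ^ 2 := by
    simp only [add_sq, Finset.sum_add_distrib, Finset.mul_sum]
    ring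
  have hle : ∑ i, (f i + g i) ^ 2
      ≤ (Real.sqrt (∑ i, f i ^ 2) + Real.sqrt (∑ i, g i ^ 2)) ^ 2 := by
    rw [hexp, add_sq, Real.sq_sqrt hf, Real.sq_sqrt hg]
    nlinarith
  calc Real.sqrt (∑ i, (f i + g i) ^ 2)
      ≤ Real.sqrt ((Real.sqrt (∑ i, f i ^ 2) + Real.sqrt (∑ i, g i ^ 2)) ^ 2) :=
        Real.sqrt_le_sqrt hle
    _ = _ := Real.sqrt_sq (by positivity)

lemma sqrt_sum_mono {f g : ι → ℝ} (h : ∀ i, f i ≤ g i) :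
    Real.sqrt (∑ i, f i) ≤ Real.sqrt (∑ i, g i) :=
  Real.sqrt_le_sqrt (Finset.sum_le_sum fun i _ => h i)

end Helpers


section MatHelpers
variable {m n : Type*} [Fintype m] [Fintype n]

lemma sum_sq_nonneg' {ι : Type*} [Fintype ι] (f : ι → ℝ) : 0 ≤ ∑ i, f i ^ 2 := by positivity

lemma frob_prod (X : Matrix m n ℝ) :
    frob X = Real.sqrt (∑ p : m × n, (X p.1 p.2) ^ 2) := by
  rw [frob, Fintype.sum_prod_type]

lemma frob_nonneg (X : Matrix m n ℝ) : 0 ≤ frob X := Real.sqrt_nonneg _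

lemma frob_sq (X : Matrix m n ℝ) : frob X ^ 2 = ∑ i, ∑ j, (X i j) ^ 2 := by
  rw [frob, Real.sq_sqrt]; positivity

lemma frob_add_le (X Y : Matrix m n ℝ) : frob (X + Y) ≤ frob X + frob Y := by
  rw [frob_prod, frob_prod, frob_prod]
  exact sqrt_sum_sq_add_le (fun p : m × n => X p.1 p.2) (fun p => Y p.1 p.2)

/-- inner product of matrices -/
noncomputable def mip (X Y : Matrix m n ℝ) : ℝ := ∑ i, ∑ j, X i j * Y i j

lemma mip_self (X : Matrix m n ℝ) : mip X X = ∑ i, ∑ j, (X i j) ^ 2 := by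
  unfold mip; exact Finset.sum_congr rfl fun i _ => Finset.sum_congr rfl fun j _ => (sq (X i j)).symm

lemma abs_mip_le (X Y : Matrix m n ℝ) : |mip X Y| ≤ frob X * frob Y := by
  have e : (∑ p : m × n, X p.1 p.2 * Y p.1 p.2) = mip X Y := Fintype.sum_prod_type _
  rw [← e, frob_prod, frob_prod]
  exact abs_sum_mul_le (fun p : m × n => X p.1 p.2) (fun p => Y p.1 p.2)

lemma frob_mono {X Y : Matrix m n ℝ} (h : ∀ i j, (X i j) ^ 2 ≤ (Y i j) ^ 2) :
    frob X ≤ frob Y := by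
  unfold frob
  exact sqrt_sum_mono fun i => Finset.sum_le_sum fun j _ => h i j

end MatHelpers

section Adj
variable {M N L : ℕ}

lemma mip_trace {m n : Type*} [Fintype m] [Fintype n] (X Y : Matrix m n ℝ) :
    mip X Y = Matrix.trace (Xᵀ * Y) := by
  unfold mip
  simp only [Matrix.trace, Matrix.diag, Matrix.mul_apply, Matrix.transpose_apply]
  exact Finset.sum_comm

lemma mip_adjoint (A : Matrix (Fin M) (Fin N) ℝ) (P : Matrix (Fin N) (Fin L) ℝ)
    (Z : Matrix (Fin M) (Fin L) ℝ) : mip (A * P) Z = mip P (Aᵀ * Z) := by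
  rw [mip_trace, mip_trace, Matrix.transpose_mul, Matrix.mul_assoc]

end Adj





section RIPlem
variable {M N : ℕ} {A : Matrix (Fin M) (Fin N) ℝ} {s : ℕ} {δ : ℝ}

lemma support_ncard_le (x : Fin N → ℝ) (T : Finset (Fin N)) (h : ∀ i, i ∉ T → x i = 0) :
    {i | x i ≠ 0}.ncard ≤ T.card := by
  have hsub : {i | x i ≠ 0} ⊆ ↑T := by
    intro i hi
    by_contra hc
    exact hi (h i hc)
  calc {i | x i ≠ 0}.ncard ≤ (↑T : Set (Fin N)).ncard :=
        Set.ncard_le_ncard hsub T.finite_toSet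
    _ = T.card := Set.ncard_coe_finset T

lemma vec_eq_zero_of_sum_sq {x : Fin N → ℝ} (h : ∑ i, x i ^ 2 ≤ 0) : ∀ i, x i = 0 := by
  intro i
  have h' : ∑ j, x j ^ 2 = 0 := le_antisymm h (by positivity)
  have := (Finset.sum_eq_zero_iff_of_nonneg (fun j _ => sq_nonneg (x j))).mp h' i (Finset.mem_univ i)
  exact pow_eq_zero_iff (n := 2) (by norm_num) |>.mp this

lemma rip_cross (hRIP : RIP A s δ) (hδ0 : 0 ≤ δ)
    (u w : Fin N → ℝ) (Su Sw : Finset (Fin N)) (hd : Disjoint Su Sw)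
    (hcard : Su.card + Sw.card ≤ s)
    (hu : ∀ i, i ∉ Su → u i = 0) (hw : ∀ i, i ∉ Sw → w i = 0) :
    |∑ m, A.mulVec u m * A.mulVec w m| ≤ δ * vnorm u * vnorm w := by
  set a := vnorm u with ha_def
  set b := vnorm w with hb_def
  have ha0 : 0 ≤ a := Real.sqrt_nonneg _
  have hb0 : 0 ≤ b := Real.sqrt_nonneg _
  by_cases hu0 : ∑ i, u i ^ 2 = 0
  · have hz : ∀ i, u i = 0 := vec_eq_zero_of_sum_sq (le_of_eq hu0)
    have : A.mulVec u = 0 := by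
      funext m
      simp [Matrix.mulVec, dotProduct]
      exact Finset.sum_eq_zero fun i _ => by rw [hz i, mul_zero]
    rw [this]
    simp
    positivity
  by_cases hw0 : ∑ i, w i ^ 2 = 0
  · have hz : ∀ i, w i = 0 := vec_eq_zero_of_sum_sq (le_of_eq hw0)
    have : A.mulVec w = 0 := by
      funext m
      simp [Matrix.mulVec, dotProduct]
      exact Finset.sum_eq_zero fun i _ => by rw [hz i, mul_zero]
    rw [this]
    simp
    positivity
  have ha2 : a ^ 2 = ∑ i, u i ^ 2 := Real.sq_sqrt (by positivity)
  have hb2 : b ^ 2 = ∑ i, w i ^ 2 := Real.sq_sqrt (by positivity)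
  have hapos : 0 < a := by
    rcases lt_or_eq_of_le ha0 with h | h
    · exact h
    · exfalso; apply hu0; rw [← ha2, ← h]; ring
  have hbpos : 0 < b := by
    rcases lt_or_eq_of_le hb0 with h | h
    · exact h
    · exfalso; apply hw0; rw [← hb2, ← h]; ring
  set u' : Fin N → ℝ := b • u with hu'_def
  set w' : Fin N → ℝ := a • w with hw'_def
  have hdis : ∀ i, u i * w i = 0 := by
    intro i
    by_cases hiu : i ∈ Su
    · have hiw : i ∉ Sw := Finset.disjoint_left.mp hd hiu
      rw [hw i hiw, mul_zero]
    · rw [hu i hiu, zero_mul]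
  -- support of u' ± w'
  have hsupp_add : ∀ i, i ∉ Su ∪ Sw → (u' + w') i = 0 := by
    intro i hi
    rw [Finset.mem_union, not_or] at hi
    simp [hu'_def, hw'_def, hu i hi.1, hw i hi.2]
  have hsupp_sub : ∀ i, i ∉ Su ∪ Sw → (u' - w') i = 0 := by
    intro i hi
    rw [Finset.mem_union, not_or] at hi
    simp [hu'_def, hw'_def, hu i hi.1, hw i hi.2]
  have hcard' : (Su ∪ Sw).card ≤ s := le_trans (Finset.card_union_le _ _) hcard
  have hnc_add : {i | (u' + w') i ≠ 0}.ncard ≤ s :=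
    le_trans (support_ncard_le _ _ hsupp_add) hcard'
  have hnc_sub : {i | (u' - w') i ≠ 0}.ncard ≤ s :=
    le_trans (support_ncard_le _ _ hsupp_sub) hcard'
  -- squared sums
  have hQadd : ∑ i, ((u' + w') i) ^ 2 = 2 * (∑ i, u i ^ 2) * (∑ i, w i ^ 2) := by
    have hterm : ∀ i, ((u' + w') i) ^ 2 = b ^ 2 * u i ^ 2 + a ^ 2 * w i ^ 2 := by
      intro i
      have h := hdis i
      simp only [Pi.add_apply, Pi.smul_apply, smul_eq_mul, hu'_def, hw'_def]
      linear_combination (2 * a * b) * h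
    rw [Finset.sum_congr rfl fun i _ => hterm i]
    rw [Finset.sum_add_distrib, ← Finset.mul_sum, ← Finset.mul_sum, ha2, hb2]
    ring
  have hQsub : ∑ i, ((u' - w') i) ^ 2 = 2 * (∑ i, u i ^ 2) * (∑ i, w i ^ 2) := by
    have hterm : ∀ i, ((u' - w') i) ^ 2 = b ^ 2 * u i ^ 2 + a ^ 2 * w i ^ 2 := by
      intro i
      have h := hdis i
      simp only [Pi.sub_apply, Pi.smul_apply, smul_eq_mul, hu'_def, hw'_def]
      linear_combination (-(2 * a * b)) * h
    rw [Finset.sum_congr rfl fun i _ => hterm i]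
    rw [Finset.sum_add_distrib, ← Finset.mul_sum, ← Finset.mul_sum, ha2, hb2]
    ring
  have hRadd := hRIP (u' + w') hnc_add
  have hRsub := hRIP (u' - w') hnc_sub
  -- parallelogram identity
  have hpar : ∑ m, (A.mulVec (u' + w') m) ^ 2 - ∑ m, (A.mulVec (u' - w') m) ^ 2
      = 4 * ∑ m, A.mulVec u' m * A.mulVec w' m := by
    rw [← Finset.sum_sub_distrib, Finset.mul_sum]
    refine Finset.sum_congr rfl fun m _ => ?_
    rw [Matrix.mulVec_add, Matrix.mulVec_sub]
    simp only [Pi.add_apply, Pi.sub_apply]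
    ring
  -- scaling
  have hscale : ∑ m, A.mulVec u' m * A.mulVec w' m
      = a * b * ∑ m, A.mulVec u m * A.mulVec w m := by
    rw [Finset.mul_sum]
    refine Finset.sum_congr rfl fun m _ => ?_
    rw [hu'_def, hw'_def, Matrix.mulVec_smul, Matrix.mulVec_smul]
    simp only [Pi.smul_apply, smul_eq_mul]
    ring
  set S := ∑ m, A.mulVec u m * A.mulVec w m with hS_def
  have hab2 : a ^ 2 * b ^ 2 = (∑ i, u i ^ 2) * (∑ i, w i ^ 2) := by rw [ha2, hb2]
  have hub : 4 * (a * b * S) ≤ 4 * (δ * (a ^ 2 * b ^ 2)) := by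
    rw [← hscale, ← hpar]
    have h1 := hRadd.2
    have h2 := hRsub.1
    rw [hQadd] at h1
    rw [hQsub] at h2
    rw [hab2]
    nlinarith [h1, h2]
  have hlb : -(4 * (δ * (a ^ 2 * b ^ 2))) ≤ 4 * (a * b * S) := by
    rw [← hscale, ← hpar]
    have h1 := hRadd.1
    have h2 := hRsub.2
    rw [hQadd] at h1
    rw [hQsub] at h2
    rw [hab2]
    nlinarith [h1, h2]
  have habs : |a * b * S| ≤ δ * (a ^ 2 * b ^ 2) := by
    rw [abs_le]; constructor <;> linarith
  rw [abs_mul, abs_mul, abs_of_pos hapos, abs_of_pos hbpos] at habs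
  have hABpos : 0 < a * b := mul_pos hapos hbpos
  have hfin : a * b * |S| ≤ a * b * (δ * a * b) := by
    calc a * b * |S| ≤ δ * (a ^ 2 * b ^ 2) := habs
      _ = a * b * (δ * a * b) := by ring
  exact le_of_mul_le_mul_left hfin hABpos

end RIPlem


section MatRIP
variable {M N L : ℕ} {A : Matrix (Fin M) (Fin N) ℝ} {s : ℕ} {δ : ℝ}

lemma mul_col_eq_mulVec (A : Matrix (Fin M) (Fin N) ℝ) (P : Matrix (Fin N) (Fin L) ℝ)
    (m : Fin M) (l : Fin L) : (A * P) m l = A.mulVec (fun n => P n l) m := by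
  rw [Matrix.mul_apply, Matrix.mulVec]
  rfl

lemma frobsq_swap {m n : Type*} [Fintype m] [Fintype n] (X : Matrix m n ℝ) :
    ∑ i, ∑ j, X i j ^ 2 = ∑ j : n, ∑ i : m, X i j ^ 2 := Finset.sum_comm

lemma rip_frob (hRIP : RIP A s δ) (P : Matrix (Fin N) (Fin L) ℝ)
    (T : Finset (Fin N)) (hT : T.card ≤ s) (hsupp : ∀ i, i ∉ T → ∀ l, P i l = 0) :
    (1 - δ) * (∑ i, ∑ l, P i l ^ 2) ≤ ∑ m, ∑ l, ((A * P) m l) ^ 2 ∧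
      ∑ m, ∑ l, ((A * P) m l) ^ 2 ≤ (1 + δ) * (∑ i, ∑ l, P i l ^ 2) := by
  have hcol : ∀ l : Fin L,
      (1 - δ) * (∑ i, P i l ^ 2) ≤ ∑ m, (A.mulVec (fun n => P n l) m) ^ 2 ∧
        ∑ m, (A.mulVec (fun n => P n l) m) ^ 2 ≤ (1 + δ) * (∑ i, P i l ^ 2) := by
    intro l
    refine hRIP _ (le_trans (support_ncard_le _ T fun i hi => hsupp i hi l) hT)
  rw [frobsq_swap P, frobsq_swap (A * P)]
  constructor
  · rw [Finset.mul_sum]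
    refine Finset.sum_le_sum fun l _ => ?_
    calc (1 - δ) * ∑ i, P i l ^ 2 ≤ ∑ m, (A.mulVec (fun n => P n l) m) ^ 2 := (hcol l).1
      _ = ∑ m, ((A * P) m l) ^ 2 :=
        Finset.sum_congr rfl fun m _ => by rw [mul_col_eq_mulVec]
  · rw [Finset.mul_sum]
    refine Finset.sum_le_sum fun l _ => ?_
    calc ∑ m, ((A * P) m l) ^ 2
        = ∑ m, (A.mulVec (fun n => P n l) m) ^ 2 :=
        Finset.sum_congr rfl fun m _ => by rw [mul_col_eq_mulVec]
      _ ≤ (1 + δ) * ∑ i, P i l ^ 2 := (hcol l).2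

lemma rip_cross_frob (hRIP : RIP A s δ) (hδ0 : 0 ≤ δ)
    (P Q : Matrix (Fin N) (Fin L) ℝ) (SP SQ : Finset (Fin N))
    (hd : Disjoint SP SQ) (hcard : SP.card + SQ.card ≤ s)
    (hP : ∀ i, i ∉ SP → ∀ l, P i l = 0) (hQ : ∀ i, i ∉ SQ → ∀ l, Q i l = 0) :
    mip (A * P) (A * Q) ≤ δ * frob P * frob Q := by
  have hcol : ∀ l : Fin L,
      |∑ m, A.mulVec (fun n => P n l) m * A.mulVec (fun n => Q n l) m|
        ≤ δ * vnorm (fun n => P n l) * vnorm (fun n => Q n l) :=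
    fun l => rip_cross hRIP hδ0 _ _ SP SQ hd hcard
      (fun i hi => hP i hi l) (fun i hi => hQ i hi l)
  have step1 : mip (A * P) (A * Q)
      = ∑ l, ∑ m, A.mulVec (fun n => P n l) m * A.mulVec (fun n => Q n l) m := by
    unfold mip
    rw [Finset.sum_comm]
    refine Finset.sum_congr rfl fun l _ => Finset.sum_congr rfl fun m _ => ?_
    rw [mul_col_eq_mulVec, mul_col_eq_mulVec]
  rw [step1]
  calc ∑ l, ∑ m, A.mulVec (fun n => P n l) m * A.mulVec (fun n => Q n l) m
      ≤ ∑ l, |∑ m, A.mulVec (fun n => P n l) m * A.mulVec (fun n => Q n l) m| :=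
        Finset.sum_le_sum fun l _ => le_abs_self _
    _ ≤ ∑ l, δ * vnorm (fun n => P n l) * vnorm (fun n => Q n l) :=
        Finset.sum_le_sum fun l _ => hcol l
    _ = δ * ∑ l, Real.sqrt (∑ n, P n l ^ 2) * Real.sqrt (∑ n, Q n l ^ 2) := by
        rw [Finset.mul_sum]
        exact Finset.sum_congr rfl fun l _ => by rw [vnorm, vnorm]; ring
    _ ≤ δ * (Real.sqrt (∑ l, ∑ n, P n l ^ 2) * Real.sqrt (∑ l, ∑ n, Q n l ^ 2)) := by
        refine mul_le_mul_of_nonneg_left ?_ hδ0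
        exact Real.sum_sqrt_mul_sqrt_le _ (fun l => by positivity) (fun l => by positivity)
    _ = δ * frob P * frob Q := by
        rw [frob, frob, frobsq_swap P, frobsq_swap Q]; ring

end MatRIP

section Ext
variable {M N L : ℕ} (Γ : Finset (Fin N))

/-- extend a Γ-indexed matrix by zero -/
noncomputable def extM (P : Matrix {j // j ∈ Γ} (Fin L) ℝ) : Matrix (Fin N) (Fin L) ℝ :=
  fun i l => if h : i ∈ Γ then P ⟨i, h⟩ l else 0

lemma extM_zero_off (P : Matrix {j // j ∈ Γ} (Fin L) ℝ) {i : Fin N} (h : i ∉ Γ) (l : Fin L) :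
    extM Γ P i l = 0 := dif_neg h

lemma extM_on (P : Matrix {j // j ∈ Γ} (Fin L) ℝ) (j : {j // j ∈ Γ}) (l : Fin L) :
    extM Γ P (↑j) l = P j l := by
  rw [extM, dif_pos j.2]

lemma extM_add (P Q : Matrix {j // j ∈ Γ} (Fin L) ℝ) :
    extM Γ (P + Q) = extM Γ P + extM Γ Q := by
  funext i l
  by_cases h : i ∈ Γ
  · simp [extM, dif_pos h]
  · simp [extM, dif_neg h]

lemma mul_extM (A : Matrix (Fin M) (Fin N) ℝ) (P : Matrix {j // j ∈ Γ} (Fin L) ℝ) :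
    A * extM Γ P = colSub A Γ * P := by
  ext m l
  rw [Matrix.mul_apply, Matrix.mul_apply]
  have h1 : ∑ n : Fin N, A m n * extM Γ P n l = ∑ n ∈ Γ, A m n * extM Γ P n l :=
    (Finset.sum_subset (Finset.subset_univ Γ)
      (fun n _ hn => by rw [extM_zero_off Γ P hn, mul_zero])).symm
  have h2 : ∑ n ∈ Γ, A m n * extM Γ P n l = ∑ j : {j // j ∈ Γ}, A m ↑j * extM Γ P ↑j l :=
    (Finset.sum_coe_sort Γ (fun n => A m n * extM Γ P n l)).symm
  rw [h1, h2]
  exact Finset.sum_congr rfl fun j _ => by rw [extM_on Γ P j l]; rfl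

lemma mulVec_extV (A : Matrix (Fin M) (Fin N) ℝ) (y : {j // j ∈ Γ} → ℝ) :
    A.mulVec (fun i => if h : i ∈ Γ then y ⟨i, h⟩ else 0) = (colSub A Γ).mulVec y := by
  funext m
  rw [Matrix.mulVec, Matrix.mulVec, dotProduct, dotProduct]
  have h1 : ∑ n : Fin N, A m n * (if h : n ∈ Γ then y ⟨n, h⟩ else 0)
      = ∑ n ∈ Γ, A m n * (if h : n ∈ Γ then y ⟨n, h⟩ else 0) :=
    (Finset.sum_subset (Finset.subset_univ Γ)
      (fun n _ hn => by rw [dif_neg hn, mul_zero])).symm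
  have h2 : ∑ n ∈ Γ, A m n * (if h : n ∈ Γ then y ⟨n, h⟩ else 0)
      = ∑ j : {j // j ∈ Γ}, A m ↑j * (if h : (↑j : Fin N) ∈ Γ then y ⟨↑j, h⟩ else 0) :=
    (Finset.sum_coe_sort Γ _).symm
  rw [h1, h2]
  exact Finset.sum_congr rfl fun j _ => by rw [dif_pos j.2]; rfl

lemma mip_extM_congr (P : Matrix {j // j ∈ Γ} (Fin L) ℝ)
    (Y1 Y2 : Matrix (Fin N) (Fin L) ℝ)
    (h : ∀ (j : {j // j ∈ Γ}) (l : Fin L), Y1 ↑j l = Y2 ↑j l) :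
    mip (extM Γ P) Y1 = mip (extM Γ P) Y2 := by
  unfold mip
  refine Finset.sum_congr rfl fun i _ => Finset.sum_congr rfl fun l _ => ?_
  by_cases hi : i ∈ Γ
  · rw [show Y1 i l = Y2 i l from h ⟨i, hi⟩ l]
  · rw [extM_zero_off Γ P hi, zero_mul, zero_mul]

lemma transpose_colSub_mul (A : Matrix (Fin M) (Fin N) ℝ) (Y : Matrix (Fin M) (Fin L) ℝ)
    (j : {j // j ∈ Γ}) (l : Fin L) :
    ((colSub A Γ)ᵀ * Y) j l = (Aᵀ * Y) (↑j) l := by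
  rw [Matrix.mul_apply, Matrix.mul_apply]
  rfl

end Ext

section Pinv
variable {m n : Type*} [Fintype m] [Fintype n] [DecidableEq n]

lemma pinv_normal (A : Matrix m n ℝ) (D : Matrix n m ℝ) (h : IsPinv A D) :
    Aᵀ * A * D = Aᵀ := by
  obtain ⟨h1, _, h3, _⟩ := h
  calc Aᵀ * A * D = Aᵀ * (A * D) := by rw [Matrix.mul_assoc]
    _ = Aᵀ * (A * D)ᵀ := by rw [h3]
    _ = Aᵀ * (Dᵀ * Aᵀ) := by rw [Matrix.transpose_mul]
    _ = (A * D * A)ᵀ := by rw [Matrix.transpose_mul, Matrix.transpose_mul]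
    _ = Aᵀ := by rw [h1]

lemma pinv_left_inv (A : Matrix m n ℝ) (D : Matrix n m ℝ) (h : IsPinv A D)
    (hinj : ∀ y : n → ℝ, A.mulVec y = 0 → y = 0) : D * A = 1 := by
  have hn := pinv_normal A D h
  have key : Aᵀ * A * (D * A) = Aᵀ * A := by
    rw [← Matrix.mul_assoc, hn]
  have hker : ∀ y : n → ℝ, (Aᵀ * A).mulVec y = 0 → y = 0 := by
    intro y hy
    apply hinj
    have hdot : A.mulVec y ⬝ᵥ A.mulVec y = 0 := by
      have h0 : y ⬝ᵥ (Aᵀ * A).mulVec y = 0 := by rw [hy, dotProduct_zero]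
      rw [← Matrix.mulVec_mulVec, Matrix.dotProduct_mulVec, Matrix.vecMul_transpose] at h0
      exact h0
    funext i
    have hsum : ∑ j, A.mulVec y j * A.mulVec y j = 0 := hdot
    have := (Finset.sum_eq_zero_iff_of_nonneg
      (fun j _ => mul_self_nonneg (A.mulVec y j))).mp hsum i (Finset.mem_univ i)
    exact mul_self_eq_zero.mp this
  have hE : Aᵀ * A * (D * A - 1) = 0 := by
    rw [Matrix.mul_sub, key, Matrix.mul_one, sub_self]
  have : D * A - 1 = 0 := by
    ext j k
    have hcol : (Aᵀ * A).mulVec (fun j' : n => ((D * A - 1 : Matrix n n ℝ)) j' k) = 0 := by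
      funext i
      have := congrFun (congrFun hE i) k
      rw [Matrix.mul_apply] at this
      rw [Matrix.mulVec, dotProduct]
      exact this
    have := congrFun (hker _ hcol) j
    exact this
  exact sub_eq_zero.mp this

end Pinv


section NewL
variable {m n : Type*} [Fintype m] [Fintype n]

lemma frob_neg (Y : Matrix m n ℝ) : frob (-Y) = frob Y := by
  unfold frob
  congr 1
  refine Finset.sum_congr rfl fun i _ => Finset.sum_congr rfl fun j _ => ?_
  rw [Matrix.neg_apply, neg_sq]

lemma frob_sub_le (X Y : Matrix m n ℝ) : frob (X - Y) ≤ frob X + frob Y := by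
  have h := frob_add_le X (-Y)
  rw [frob_neg] at h
  rw [sub_eq_add_neg]
  exact h

lemma frob_restrict_le (Y : Matrix m n ℝ) (s : Set m) :
    frob (restrictRows Y s) ≤ frob Y := by
  refine frob_mono fun i j => ?_
  by_cases h : i ∈ s
  · have : restrictRows Y s i j = Y i j := Set.indicator_of_mem h _
    rw [this]
  · have : restrictRows Y s i j = 0 := Set.indicator_of_notMem h _
    rw [this]
    simpa using sq_nonneg (Y i j)

lemma frob_restrict_sq [DecidableEq m] (Y : Matrix m n ℝ) (t : Finset m) :
    frob (restrictRows Y ↑t) ^ 2 = ∑ i ∈ t, rowNorm Y i ^ 2 := by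
  rw [frob_sq]
  have hrow : ∀ i, ∑ l, (restrictRows Y ↑t i l) ^ 2
      = if i ∈ t then rowNorm Y i ^ 2 else 0 := by
    intro i
    by_cases h : i ∈ t
    · rw [if_pos h, rowNorm, Real.sq_sqrt (by positivity)]
      refine Finset.sum_congr rfl fun l _ => ?_
      have : restrictRows Y ↑t i l = Y i l := Set.indicator_of_mem (Finset.mem_coe.mpr h) _
      rw [this]
    · rw [if_neg h]
      refine Finset.sum_eq_zero fun l _ => ?_
      have : restrictRows Y ↑t i l = 0 :=
        Set.indicator_of_notMem (by simpa using h) _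
      rw [this]
      norm_num
  rw [Finset.sum_congr rfl (fun i _ => hrow i), Finset.sum_ite_mem, Finset.univ_inter]

end NewL


set_option maxHeartbeats 2000000 in
theorem stmt12 {M N L R K : ℕ} (A : Matrix (Fin M) (Fin N) ℝ) (δ : ℝ)
    (hδ0 : 0 ≤ δ) (hδ : δ < 1) (hRIP : RIP A (R + K) δ)
    (X : Matrix (Fin N) (Fin L) ℝ)
    (S : Finset (Fin N)) (hS : S.card = K)
    (hSdom : ∀ i ∈ S, ∀ j ∉ S, rowNorm X j ≤ rowNorm X i)
    (XK : Matrix (Fin N) (Fin L) ℝ) (hXK : XK = restrictRows X (S : Set (Fin N)))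
    (Γ : Finset (Fin N)) (hΓ : Γ.card ≤ R)
    (DΓ : Matrix {j // j ∈ Γ} (Fin M) ℝ) (hDΓ : IsPinv (colSub A Γ) DΓ)
    (W B : Matrix (Fin M) (Fin L) ℝ) (hB : B = A * X + W)
    (V : Matrix (Fin N) (Fin L) ℝ)
    (hV : V = fun i j => if h : i ∈ Γ then (DΓ * B) ⟨i, h⟩ j else 0)
    (That : Finset (Fin N)) (hThatΓ : That ⊆ Γ) (hThatK : That.card = K)
    (hsel : ∀ i ∈ That, ∀ j ∉ That, rowNorm V j ≤ rowNorm V i) :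
    frob (restrictRows XK {i | i ∉ That}) ≤
      ((1 + δ) / (1 - δ)) * frob (restrictRows XK {i | i ∉ Γ}) +
        (2 / (1 - δ)) * (frob (A * (X - XK)) + frob W) := by
  classical
  -- abbreviations
  set AΓ := colSub A Γ with hAΓ_def
  have h1δ : (0:ℝ) < 1 - δ := by linarith
  have hΓRK : Γ.card ≤ R + K := le_trans hΓ (Nat.le_add_right R K)
  -- injectivity of AΓ
  have hinj : ∀ y : {j // j ∈ Γ} → ℝ, AΓ.mulVec y = 0 → y = 0 := by
    intro y hy
    set x : Fin N → ℝ := fun i => if h : i ∈ Γ then y ⟨i, h⟩ else 0 with hx_def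
    have hAx : A.mulVec x = 0 := (mulVec_extV Γ A y).trans hy
    have hnc : {i | x i ≠ 0}.ncard ≤ R + K :=
      le_trans (support_ncard_le x Γ (fun i hi => dif_neg hi)) hΓRK
    have h1 := (hRIP x hnc).1
    rw [hAx] at h1
    simp at h1
    have hx2 : ∑ i, x i ^ 2 ≤ 0 := by nlinarith [sum_sq_nonneg x, h1]
    funext j
    have h := vec_eq_zero_of_sum_sq hx2 ↑j
    rw [hx_def] at h
    simp only [dif_pos j.2] at h
    exact h
  -- pseudo-inverse facts
  have hnorm : AΓᵀ * AΓ * DΓ = AΓᵀ := pinv_normal AΓ DΓ hDΓ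
  have hDA : DΓ * AΓ = 1 := pinv_left_inv AΓ DΓ hDΓ hinj
  -- matrices
  set XKc := restrictRows XK {i | i ∉ Γ} with hXKc_def
  set XKΓ := restrictRows XK (↑Γ : Set (Fin N)) with hXKΓ_def
  set XKsub : Matrix {j // j ∈ Γ} (Fin L) ℝ := fun j l => XK ↑j l with hXKsub_def
  set Z1 := A * XKc with hZ1_def
  set Z2 := A * (X - XK) + W with hZ2_def
  set P1 := DΓ * Z1 with hP1_def
  set P2 := DΓ * Z2 with hP2_def
  set U1 := extM Γ P1 with hU1_def
  set U2 := extM Γ P2 with hU2_def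
  -- split of XK
  have hXKsplit : XK = XKΓ + XKc := by
    funext i l
    rw [hXKΓ_def, hXKc_def]
    by_cases h : i ∈ Γ
    · have h1 : (↑Γ : Set (Fin N)).indicator (fun i' => XK i' l) i = XK i l :=
        Set.indicator_of_mem (Finset.mem_coe.mpr h) _
      have h2 : ({i | i ∉ Γ} : Set (Fin N)).indicator (fun i' => XK i' l) i = 0 :=
        Set.indicator_of_notMem (by simpa using h) _
      show XK i l = _ + _
      rw [show restrictRows XK (↑Γ) i l = _ from h1, show restrictRows XK {i | i ∉ Γ} i l = _ from h2]
      ring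
    · have h1 : (↑Γ : Set (Fin N)).indicator (fun i' => XK i' l) i = 0 :=
        Set.indicator_of_notMem (by simpa using h) _
      have h2 : ({i | i ∉ Γ} : Set (Fin N)).indicator (fun i' => XK i' l) i = XK i l :=
        Set.indicator_of_mem (by simpa using h) _
      show XK i l = _ + _
      rw [show restrictRows XK (↑Γ) i l = _ from h1, show restrictRows XK {i | i ∉ Γ} i l = _ from h2]
      ring
  have hXKΓext : XKΓ = extM Γ XKsub := by
    funext i l
    by_cases h : i ∈ Γ
    · rw [hXKΓ_def]
      show (↑Γ : Set (Fin N)).indicator (fun i' => XK i' l) i = _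
      rw [Set.indicator_of_mem (Finset.mem_coe.mpr h), extM, dif_pos h]
    · rw [hXKΓ_def]
      show (↑Γ : Set (Fin N)).indicator (fun i' => XK i' l) i = _
      rw [Set.indicator_of_notMem (by simpa using h), extM, dif_neg h]
  -- decomposition of B
  have hBdec : B = AΓ * XKsub + Z1 + Z2 := by
    have e1 : A * X = A * XK + A * (X - XK) := by
      rw [← Matrix.mul_add, add_sub_cancel]
    have e2 : A * XK = AΓ * XKsub + Z1 := by
      rw [hXKsplit, Matrix.mul_add, hZ1_def]
      congr 1
      rw [hXKΓext, mul_extM]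
    rw [hB, e1, e2, hZ2_def]
    abel
  -- decomposition of V
  have hDB : DΓ * B = XKsub + (P1 + P2) := by
    rw [hBdec, Matrix.mul_add, Matrix.mul_add, ← Matrix.mul_assoc, hDA, Matrix.one_mul,
      ← hP1_def, ← hP2_def]
    abel
  have hVE : V = extM Γ (DΓ * B) := hV
  have hVdec : V = XKΓ + (U1 + U2) := by
    rw [hVE, hDB, extM_add, extM_add, ← hXKΓext, hU1_def, hU2_def]
  -- supports
  have hU1supp : ∀ i, i ∉ Γ → ∀ l, U1 i l = 0 := fun i hi l => extM_zero_off Γ P1 hi l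
  have hU2supp : ∀ i, i ∉ Γ → ∀ l, U2 i l = 0 := fun i hi l => extM_zero_off Γ P2 hi l
  have hXKS : ∀ i, i ∉ S → ∀ l, XK i l = 0 := by
    intro i hi l
    rw [hXK]
    exact Set.indicator_of_notMem (by simpa using hi) _
  have hXKcsupp : ∀ i, i ∉ S \ Γ → ∀ l, XKc i l = 0 := by
    intro i hi l
    rw [Finset.mem_sdiff, not_and_or, not_not] at hi
    by_cases hiΓ : i ∈ Γ
    · rw [hXKc_def]
      exact Set.indicator_of_notMem (by simpa using hiΓ) _
    · have hiS : i ∉ S := by tauto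
      rw [hXKc_def]
      show ({i | i ∉ Γ} : Set (Fin N)).indicator (fun i' => XK i' l) i = 0
      rw [Set.indicator_of_mem (by simpa using hiΓ)]
      exact hXKS i hiS l
  -- key identities
  have hkey1 : AΓᵀ * (A * U1) = AΓᵀ * Z1 := by
    rw [hU1_def, mul_extM, ← Matrix.mul_assoc, hP1_def, ← Matrix.mul_assoc, hnorm]
  have hkey2 : AΓᵀ * (A * U2) = AΓᵀ * Z2 := by
    rw [hU2_def, mul_extM, ← Matrix.mul_assoc, hP2_def, ← Matrix.mul_assoc, hnorm]
  have hQ1 : mip (A * U1) (A * U1) = mip (A * U1) Z1 := by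
    rw [mip_adjoint, mip_adjoint]
    exact mip_extM_congr Γ P1 _ _ (fun j l => by
      rw [← transpose_colSub_mul Γ A _ j l, ← transpose_colSub_mul Γ A _ j l, hkey1])
  have hQ2 : mip (A * U2) (A * U2) = mip (A * U2) Z2 := by
    rw [mip_adjoint, mip_adjoint]
    exact mip_extM_congr Γ P2 _ _ (fun j l => by
      rw [← transpose_colSub_mul Γ A _ j l, ← transpose_colSub_mul Γ A _ j l, hkey2])
  -- bound on U1
  have hdisj : Disjoint Γ (S \ Γ) := Finset.disjoint_sdiff
  have hcards : Γ.card + (S \ Γ).card ≤ R + K := by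
    have h1 : (S \ Γ).card ≤ S.card := Finset.card_le_card (Finset.sdiff_subset)
    omega
  have hcross1 : mip (A * U1) (A * XKc) ≤ δ * frob U1 * frob XKc :=
    rip_cross_frob hRIP hδ0 U1 XKc Γ (S \ Γ) hdisj hcards hU1supp hXKcsupp
  have hlow1 := (rip_frob hRIP U1 Γ hΓRK hU1supp).1
  have hU1sq : (1 - δ) * frob U1 ^ 2 ≤ δ * frob U1 * frob XKc := by
    rw [frob_sq]
    calc (1 - δ) * (∑ i, ∑ l, U1 i l ^ 2) ≤ ∑ m, ∑ l, ((A * U1) m l) ^ 2 := hlow1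
      _ = mip (A * U1) (A * U1) := (mip_self _).symm
      _ = mip (A * U1) Z1 := hQ1
      _ ≤ δ * frob U1 * frob XKc := hcross1
  have hU1bound : (1 - δ) * frob U1 ≤ δ * frob XKc :=
    cancel_bound (frob_nonneg U1) (frob_nonneg XKc) hδ0 hU1sq
  -- bound on U2
  have hlow2 := (rip_frob hRIP U2 Γ hΓRK hU2supp).1
  have hcs2 : mip (A * U2) Z2 ≤ frob (A * U2) * frob Z2 :=
    le_trans (le_abs_self _) (abs_mip_le _ _)
  have hAU2sq : frob (A * U2) ^ 2 ≤ frob (A * U2) * frob Z2 := by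
    rw [frob_sq]
    calc (∑ m, ∑ l, ((A * U2) m l) ^ 2) = mip (A * U2) (A * U2) := (mip_self _).symm
      _ = mip (A * U2) Z2 := hQ2
      _ ≤ frob (A * U2) * frob Z2 := hcs2
  have hAU2 : frob (A * U2) ≤ frob Z2 :=
    cancel_bound2 (frob_nonneg (A * U2)) (frob_nonneg Z2) hAU2sq
  have hU2sq : (1 - δ) * frob U2 ^ 2 ≤ frob Z2 ^ 2 := by
    rw [frob_sq]
    calc (1 - δ) * (∑ i, ∑ l, U2 i l ^ 2) ≤ ∑ m, ∑ l, ((A * U2) m l) ^ 2 := hlow2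
      _ = frob (A * U2) ^ 2 := (frob_sq _).symm
      _ ≤ frob Z2 ^ 2 := pow_le_pow_left₀ (frob_nonneg (A * U2)) hAU2 2
  have hU2bound : (1 - δ) * frob U2 ≤ frob Z2 :=
    shrink_bound hδ0 h1δ (frob_nonneg U2) (frob_nonneg Z2) hU2sq
  -- selection combinatorics
  set Psel := (S ∩ Γ) \ That with hPsel_def
  set Qsel := That \ S with hQsel_def
  have hcardPQ : Psel.card ≤ Qsel.card := by
    have hdisj2 : Disjoint Psel (S ∩ That) := by
      rw [Finset.disjoint_left]
      intro i hi hmem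
      rw [hPsel_def, Finset.mem_sdiff] at hi
      exact hi.2 (Finset.mem_inter.mp hmem).2
    have hsub2 : Psel ∪ (S ∩ That) ⊆ S := by
      intro i hi
      rcases Finset.mem_union.mp hi with h | h
      · exact (Finset.mem_inter.mp (Finset.mem_sdiff.mp h).1).1
      · exact (Finset.mem_inter.mp h).1
    have h1 : Psel.card + (S ∩ That).card ≤ K := by
      rw [← Finset.card_union_of_disjoint hdisj2]
      rw [← hS]
      exact Finset.card_le_card hsub2
    have hQeq : Qsel = That \ (S ∩ That) := by
      ext i
      simp only [hQsel_def, Finset.mem_sdiff, Finset.mem_inter]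
      tauto
    have h2 : Qsel.card = K - (S ∩ That).card := by
      rw [hQeq, Finset.card_sdiff_of_subset (Finset.inter_subset_right), hThatK]
    omega
  have hdom : ∀ p ∈ Psel, ∀ q ∈ Qsel, rowNorm V p ≤ rowNorm V q := by
    intro p hp q hq
    have hpT : p ∉ That := (Finset.mem_sdiff.mp hp).2
    have hqT : q ∈ That := (Finset.mem_sdiff.mp hq).1
    exact hsel q hqT p hpT
  have hsumPQ : ∑ p ∈ Psel, rowNorm V p ^ 2 ≤ ∑ q ∈ Qsel, rowNorm V q ^ 2 := by
    rcases Finset.eq_empty_or_nonempty Qsel with he | hne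
    · have hPe : Psel = ∅ := by
        rw [he] at hcardPQ
        simpa using Finset.card_eq_zero.mp (Nat.le_zero.mp hcardPQ)
      rw [hPe, he]
    · obtain ⟨q0, hq0, hq0min⟩ := Finset.exists_min_image Qsel (fun q => rowNorm V q ^ 2) hne
      have hc0 : (0:ℝ) ≤ rowNorm V q0 ^ 2 := sq_nonneg _
      calc ∑ p ∈ Psel, rowNorm V p ^ 2
          ≤ ∑ _p ∈ Psel, rowNorm V q0 ^ 2 :=
            Finset.sum_le_sum (fun p hp =>
              pow_le_pow_left₀ (Real.sqrt_nonneg _) (hdom p hp q0 hq0) 2)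
        _ = Psel.card • (rowNorm V q0 ^ 2) := by rw [Finset.sum_const]
        _ ≤ Qsel.card • (rowNorm V q0 ^ 2) := nsmul_le_nsmul_left hc0 hcardPQ
        _ ≤ ∑ q ∈ Qsel, rowNorm V q ^ 2 :=
            Finset.card_nsmul_le_sum Qsel _ _ (fun q hq => hq0min q hq)
  -- pointwise decompositions
  set Uall := U1 + U2 with hUall_def
  have hUallΓ : ∀ i l, V i l = XKΓ i l + Uall i l := by
    intro i l
    have := congrFun (congrFun hVdec i) l
    rw [this]
    rfl
  have hsplit : restrictRows XK {i | i ∉ That}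
      = XKc + restrictRows XK (↑Psel : Set (Fin N)) := by
    funext i l
    rw [Matrix.add_apply]
    by_cases hT : i ∈ That
    · have hiΓ : i ∈ Γ := hThatΓ hT
      have e1 : restrictRows XK {i | i ∉ That} i l = 0 :=
        Set.indicator_of_notMem (by simpa using hT) _
      have e2 : XKc i l = 0 := by
        rw [hXKc_def]; exact Set.indicator_of_notMem (by simpa using hiΓ) _
      have hiP : i ∉ Psel := fun hmem => (Finset.mem_sdiff.mp hmem).2 hT
      have e3 : restrictRows XK (↑Psel : Set (Fin N)) i l = 0 :=
        Set.indicator_of_notMem (by simpa using hiP) _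
      rw [e1, e2, e3]; ring
    · have e1 : restrictRows XK {i | i ∉ That} i l = XK i l :=
        Set.indicator_of_mem (by simpa using hT) _
      by_cases hiΓ : i ∈ Γ
      · have e2 : XKc i l = 0 := by
          rw [hXKc_def]; exact Set.indicator_of_notMem (by simpa using hiΓ) _
        by_cases hiS : i ∈ S
        · have hiP : i ∈ Psel := by
            rw [hPsel_def, Finset.mem_sdiff, Finset.mem_inter]
            exact ⟨⟨hiS, hiΓ⟩, hT⟩
          have e3 : restrictRows XK (↑Psel : Set (Fin N)) i l = XK i l :=
            Set.indicator_of_mem (Finset.mem_coe.mpr hiP) _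
          rw [e1, e2, e3]; ring
        · have hiP : i ∉ Psel := by
            rw [hPsel_def, Finset.mem_sdiff, Finset.mem_inter]
            tauto
          have e3 : restrictRows XK (↑Psel : Set (Fin N)) i l = 0 :=
            Set.indicator_of_notMem (by simpa using hiP) _
          rw [e1, e2, e3, hXKS i hiS l]; ring
      · have e2 : XKc i l = XK i l := by
          rw [hXKc_def]; exact Set.indicator_of_mem (by simpa using hiΓ) _
        have hiP : i ∉ Psel := by
          rw [hPsel_def, Finset.mem_sdiff, Finset.mem_inter]
          tauto
        have e3 : restrictRows XK (↑Psel : Set (Fin N)) i l = 0 :=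
          Set.indicator_of_notMem (by simpa using hiP) _
        rw [e1, e2, e3]; ring
  have hXKΓmem : ∀ i, i ∈ Γ → ∀ l, XKΓ i l = XK i l := by
    intro i hi l
    rw [hXKΓ_def]
    exact Set.indicator_of_mem (Finset.mem_coe.mpr hi) _
  have hPselXK : restrictRows XK (↑Psel : Set (Fin N))
      = restrictRows V ↑Psel - restrictRows Uall ↑Psel := by
    funext i l
    rw [Matrix.sub_apply]
    by_cases h : i ∈ Psel
    · have hiΓ : i ∈ Γ := (Finset.mem_inter.mp (Finset.mem_sdiff.mp h).1).2
      have hV' : V i l = XKΓ i l + Uall i l := hUallΓ i l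
      have hXKΓi : XKΓ i l = XK i l := hXKΓmem i hiΓ l
      have e1 : restrictRows XK (↑Psel : Set (Fin N)) i l = XK i l :=
        Set.indicator_of_mem (Finset.mem_coe.mpr h) _
      have e2 : restrictRows V (↑Psel : Set (Fin N)) i l = V i l :=
        Set.indicator_of_mem (Finset.mem_coe.mpr h) _
      have e3 : restrictRows Uall (↑Psel : Set (Fin N)) i l = Uall i l :=
        Set.indicator_of_mem (Finset.mem_coe.mpr h) _
      rw [e1, e2, e3]
      rw [hV', hXKΓi]
      ring
    · have e1 : restrictRows XK (↑Psel : Set (Fin N)) i l = 0 :=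
        Set.indicator_of_notMem (by simpa using h) _
      have e2 : restrictRows V (↑Psel : Set (Fin N)) i l = 0 :=
        Set.indicator_of_notMem (by simpa using h) _
      have e3 : restrictRows Uall (↑Psel : Set (Fin N)) i l = 0 :=
        Set.indicator_of_notMem (by simpa using h) _
      rw [e1, e2, e3]; ring
  have hQselVU : restrictRows V (↑Qsel : Set (Fin N)) = restrictRows Uall ↑Qsel := by
    funext i l
    by_cases h : i ∈ Qsel
    · have hiT : i ∈ That := (Finset.mem_sdiff.mp h).1
      have hiS : i ∉ S := (Finset.mem_sdiff.mp h).2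
      have hiΓ : i ∈ Γ := hThatΓ hiT
      have hV' : V i l = XKΓ i l + Uall i l := hUallΓ i l
      have hXKΓi : XKΓ i l = XK i l := hXKΓmem i hiΓ l
      have e2 : restrictRows V (↑Qsel : Set (Fin N)) i l = V i l :=
        Set.indicator_of_mem (Finset.mem_coe.mpr h) _
      have e3 : restrictRows Uall (↑Qsel : Set (Fin N)) i l = Uall i l :=
        Set.indicator_of_mem (Finset.mem_coe.mpr h) _
      rw [e2, e3, hV', hXKΓi, hXKS i hiS l]
      ring
    · have e2 : restrictRows V (↑Qsel : Set (Fin N)) i l = 0 :=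
        Set.indicator_of_notMem (by simpa using h) _
      have e3 : restrictRows Uall (↑Qsel : Set (Fin N)) i l = 0 :=
        Set.indicator_of_notMem (by simpa using h) _
      rw [e2, e3]
  -- frob chains
  have hfrobPV : frob (restrictRows V (↑Psel : Set (Fin N)))
      ≤ frob (restrictRows V (↑Qsel : Set (Fin N))) := by
    rw [← Real.sqrt_sq (frob_nonneg (restrictRows V (↑Psel : Set (Fin N)))),
      ← Real.sqrt_sq (frob_nonneg (restrictRows V (↑Qsel : Set (Fin N))))]
    refine Real.sqrt_le_sqrt ?_
    rw [frob_restrict_sq V Psel, frob_restrict_sq V Qsel]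
    exact hsumPQ
  have hUallbd : frob Uall ≤ frob U1 + frob U2 := frob_add_le U1 U2
  have hchain : frob (restrictRows XK (↑Psel : Set (Fin N))) ≤ 2 * (frob U1 + frob U2) := by
    calc frob (restrictRows XK (↑Psel : Set (Fin N)))
        ≤ frob (restrictRows V (↑Psel : Set (Fin N)))
            + frob (restrictRows Uall (↑Psel : Set (Fin N))) := by
          rw [hPselXK]; exact frob_sub_le _ _
      _ ≤ frob (restrictRows V (↑Qsel : Set (Fin N))) + frob Uall :=
          add_le_add hfrobPV (frob_restrict_le _ _)
      _ = frob (restrictRows Uall (↑Qsel : Set (Fin N))) + frob Uall := by rw [hQselVU]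
      _ ≤ frob Uall + frob Uall := add_le_add (frob_restrict_le _ _) le_rfl
      _ ≤ (frob U1 + frob U2) + (frob U1 + frob U2) := add_le_add hUallbd hUallbd
      _ = 2 * (frob U1 + frob U2) := by ring
  have hmain : frob (restrictRows XK {i | i ∉ That})
      ≤ frob XKc + 2 * (frob U1 + frob U2) := by
    rw [hsplit]
    calc frob (XKc + restrictRows XK (↑Psel : Set (Fin N)))
        ≤ frob XKc + frob (restrictRows XK (↑Psel : Set (Fin N))) := frob_add_le _ _
      _ ≤ frob XKc + 2 * (frob U1 + frob U2) := by linarith [hchain]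
  -- final arithmetic
  have hZ2c : frob Z2 ≤ frob (A * (X - XK)) + frob W := frob_add_le _ _
  have hb2 : (1 - δ) * frob U2 ≤ frob (A * (X - XK)) + frob W := le_trans hU2bound hZ2c
  have hd0 : 0 ≤ frob XKc := frob_nonneg _
  have hdd : 0 ≤ δ * frob XKc := mul_nonneg hδ0 hd0
  rw [div_mul_eq_mul_div, div_mul_eq_mul_div, ← add_div, le_div_iff₀ h1δ]
  have hmul := mul_le_mul_of_nonneg_right hmain (le_of_lt h1δ)
  linarith [hmul, hU1bound, hb2, hdd, hd0]
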